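/- Let M be the compact topological monoid 𝕋 × ℕ∞, where ℕ∞ = ℕ ∪ {∞} carries the one-point-compactification topology of the discrete space ℕ, with multiplication (z₁, n₁)·(z₂, n₂) = (z₁z₂, min(n₁, n₂)) and unit (1, ∞). A Borel probability measure μ on M is idempotent (μ⋆μ = μ) if and only if there exist n ∈ ℕ∞ and an idempotent Borel probability measure ρ on 𝕋 such that μ is the product measure ρ × δ_n, where δ_n is the Dirac measure at n. -/

import Mathlib

open MeasureTheory

noncomputable section

instance : MeasurableSpace Circle := borel Circle

/-- `ℕ∞ = ℕ ∪ {∞}` carries the one-point-compactification topology of the discrete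
space `ℕ` (the order topology); we equip it with the Borel σ-algebra. -/
instance : MeasurableSpace ℕ∞ := borel ℕ∞

/-- The compact topological monoid `M = 𝕋 × ℕ∞` with multiplication
`(z₁,n₁)·(z₂,n₂) = (z₁z₂, min n₁ n₂)` and unit `(1, ∞)`. Convolution of measures on `M`:
the pushforward of the product measure under multiplication. -/
def convM (μ ν : Measure (Circle × ℕ∞)) : Measure (Circle × ℕ∞) :=
  Measure.map (fun p : (Circle × ℕ∞) × (Circle × ℕ∞) => (p.1.1 * p.2.1, min p.1.2 p.2.2))
    (μ.prod ν)

/-- Convolution of measures on the circle group `𝕋`. -/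
def convT (μ ν : Measure Circle) : Measure Circle :=
  Measure.map (fun p : Circle × Circle => p.1 * p.2) (μ.prod ν)

/-!
Min-convolution multiplies tail probabilities: the second marginal `ν` of an idempotent `μ`
satisfies `ν [k, ∞] = ν [k, ∞] ^ 2`, so every tail has measure `0` or `1`, and `ν` is the Dirac
mass at the supremum `n` of the points with a full tail. Hence `μ` lives on `𝕋 × {n}`, so it is
the product of its first marginal, which is idempotent on `𝕋`, with `δ_n`. Conversely
`(ρ × δ_n) ⋆ (ρ × δ_n) = (ρ ⋆ ρ) × δ_n`.
-/

instance : BorelSpace Circle := ⟨rfl⟩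
instance : BorelSpace ℕ∞ := ⟨rfl⟩

open Set

theorem ENNReal.eq_zero_or_one_of_mul_self_eq {x : ENNReal} (hx : x ≠ ⊤) (h : x * x = x) :
    x = 0 ∨ x = 1 :=
  or_iff_not_imp_left.2 fun h0 ↦ (ENNReal.mul_right_inj h0 hx).1 (by rw [h, mul_one])

namespace MeasureTheory.Measure

variable {α β : Type*} [MeasurableSpace α] [MeasurableSpace β]

theorem eq_dirac_of_ae_eq {μ : Measure α} [IsProbabilityMeasure μ] {a : α}
    (h : ∀ᵐ x ∂μ, x = a) : μ = dirac a := by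
  rw [← map_id' (μ := μ), map_congr h, map_const, measure_univ, one_smul]

theorem eq_prod_dirac_of_map_snd_eq_dirac [MeasurableSingletonClass β] {μ : Measure (α × β)}
    [SFinite μ] {b : β} (h : μ.map Prod.snd = dirac b) :
    μ = (μ.map Prod.fst).prod (dirac b) := by
  have hb : ∀ᵐ p ∂μ, p.2 = b :=
    (ae_map_iff (p := (· = b)) measurable_snd.aemeasurable (measurableSet_singleton b)).1
      (h ▸ ae_eq_dirac id)
  rw [prod_dirac, map_map (by fun_prop) measurable_fst]
  conv_lhs => rw [← map_id' (μ := μ)]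
  exact map_congr (hb.mono fun p hp ↦ Prod.ext rfl hp)

section LinearOrder

variable [LinearOrder α] [MeasurableInf₂ α]

theorem map_min_prod_apply_Ici (μ ν : Measure α) [SFinite ν] {a : α}
    (ha : MeasurableSet (Ici a)) :
    (μ.prod ν).map (fun p ↦ min p.1 p.2) (Ici a) = μ (Ici a) * ν (Ici a) := by
  have hpre : (fun p : α × α ↦ min p.1 p.2) ⁻¹' Ici a = Ici a ×ˢ Ici a := by
    ext p
    simp only [mem_preimage, mem_Ici, mem_prod, le_min_iff]
  rw [map_apply measurable_inf ha, hpre, prod_prod]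

theorem measure_Ici_eq_zero_or_one_of_map_min_prod_self {ν : Measure α} [IsFiniteMeasure ν]
    (h : (ν.prod ν).map (fun p ↦ min p.1 p.2) = ν) {a : α} (ha : MeasurableSet (Ici a)) :
    ν (Ici a) = 0 ∨ ν (Ici a) = 1 := by
  refine ENNReal.eq_zero_or_one_of_mul_self_eq (measure_ne_top ν _) ?_
  rw [← map_min_prod_apply_Ici ν ν ha, h]

end LinearOrder

theorem exists_eq_dirac_of_measure_Ici_eq_zero_or_one [CompleteLinearOrder α] [Countable α]
    [MeasurableSingletonClass α] {ν : Measure α} [IsProbabilityMeasure ν]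
    (h : ∀ a, ν (Ici a) = 0 ∨ ν (Ici a) = 1) : ∃ a, ν = dirac a := by
  set S := {a | ν (Ici a) = 1}
  have hIio : ν (Iio (sSup S)) = 0 := by
    rw [← (isLUB_sSup S).biUnion_Iio_eq, measure_biUnion_null_iff S.to_countable]
    intro a ha
    rwa [← compl_Ici, prob_compl_eq_zero_iff (to_countable _).measurableSet]
  have hIoi : ν (Ioi (sSup S)) = 0 := by
    have hUnion : Ioi (sSup S) = ⋃ a ∈ Ioi (sSup S), Ici a := by
      ext x
      simp only [mem_Ioi, mem_iUnion, mem_Ici, exists_prop]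
      exact ⟨fun hx ↦ ⟨x, hx, le_rfl⟩, fun ⟨a, ha, hax⟩ ↦ ha.trans_le hax⟩
    rw [hUnion, measure_biUnion_null_iff (to_countable _)]
    exact fun a ha ↦ (h a).resolve_right fun haS : a ∈ S ↦ (le_sSup haS).not_gt ha
  refine ⟨sSup S, eq_dirac_of_ae_eq ?_⟩
  exact measure_mono_null (fun x hx ↦ lt_or_gt_of_ne hx) (measure_union_null hIio hIoi)

end MeasureTheory.Measure

open Measure

theorem ENat.exists_eq_dirac_of_map_min_prod_self {ν : Measure ℕ∞} [IsProbabilityMeasure ν]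
    (h : (ν.prod ν).map (fun p ↦ min p.1 p.2) = ν) : ∃ n, ν = dirac n :=
  exists_eq_dirac_of_measure_Ici_eq_zero_or_one fun _ ↦
    measure_Ici_eq_zero_or_one_of_map_min_prod_self h measurableSet_Ici

section Marginals

variable {μ ν : Measure (Circle × ℕ∞)} [SFinite μ] [SFinite ν]

theorem map_fst_convM : (convM μ ν).map Prod.fst = convT (μ.map Prod.fst) (ν.map Prod.fst) := by
  rw [convM, convT, map_map measurable_fst (by fun_prop),
    map_prod_map _ _ measurable_fst measurable_fst, map_map (by fun_prop) (by fun_prop)]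
  rfl

theorem map_snd_convM :
    (convM μ ν).map Prod.snd =
      ((μ.map Prod.snd).prod (ν.map Prod.snd)).map (fun p ↦ min p.1 p.2) := by
  rw [convM, map_map measurable_snd (by fun_prop),
    map_prod_map _ _ measurable_snd measurable_snd, map_map (by fun_prop) (by fun_prop)]
  rfl

end Marginals

theorem convM_prod_dirac (ρ σ : Measure Circle) [SFinite ρ] [SFinite σ] (m n : ℕ∞) :
    convM (ρ.prod (dirac m)) (σ.prod (dirac n)) =
      (convT ρ σ).prod (dirac (min m n)) := by
  rw [prod_dirac, prod_dirac, convM, convT, prod_dirac,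
    map_prod_map _ _ (by fun_prop) (by fun_prop), map_map (by fun_prop) (by fun_prop),
    map_map (by fun_prop) (by fun_prop)]
  rfl

/-- A Borel probability measure `μ` on the compact monoid `M = 𝕋 × ℕ∞` is idempotent if
and only if `μ = ρ × δ_n` for some `n ∈ ℕ∞` and some idempotent Borel probability
measure `ρ` on `𝕋`. -/
theorem idempotent_measures_on_M (μ : Measure (Circle × ℕ∞))
    (hμ : IsProbabilityMeasure μ) :
    convM μ μ = μ ↔
      ∃ (n : ℕ∞) (ρ : Measure Circle), IsProbabilityMeasure ρ ∧ convT ρ ρ = ρ ∧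
        μ = ρ.prod (Measure.dirac n) := by
  constructor
  · intro h
    have : IsProbabilityMeasure (μ.map Prod.snd) := isProbabilityMeasure_map (by fun_prop)
    obtain ⟨n, hn⟩ := ENat.exists_eq_dirac_of_map_min_prod_self (ν := μ.map Prod.snd)
      (by rw [← map_snd_convM, h])
    exact ⟨n, μ.map Prod.fst, isProbabilityMeasure_map (by fun_prop),
      by rw [← map_fst_convM, h], eq_prod_dirac_of_map_snd_eq_dirac hn⟩
  · rintro ⟨n, ρ, hρ, hρρ, rfl⟩
    rw [convM_prod_dirac, hρρ, min_self]

end
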